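/- arXiv:2503.23349 — 2 statements merged into one kernel-verified Lean document; each statement's English description precedes it below -/
import Mathlib

section
/- Let g(s) = ∑_{n=2}^∞ b_n n^{-s} be a Dirichlet series with b_n > 0 for all n ≥ 2 and abscissa of absolute convergence σ_a(g) < ∞ (possibly −∞), let α > 0, and suppose there exists ρ ∈ (σ_a(g), ∞) with g(ρ) = α. Then f := 1/(α − g) is representable by a convergent Dirichlet series f(s) = ∑_{n=1}^∞ c_n n^{-s} in some right half-plane, and σ_a(f) = δ_a(f) = ρ. -/
open scoped BigOperators Classical

noncomputable section

/-- Greatest prime factor of `n`, with the convention `gpf 1 = 1`. -/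
def gpf (n : ℕ) : ℕ := if n = 1 then 1 else n.primeFactors.sup id

/-- `nthPrime n` is the `(n+1)`-st prime number `p_{n+1}`, so `nthPrime 0 = 2`. -/
def nthPrime (n : ℕ) : ℕ := Nat.nth Nat.Prime n

/-- The coefficient sequence `a` restricted to `p`-smooth indices
(indices whose greatest prime factor is at most `p`). -/
def smoothCoeff (p : ℕ) (a : ℕ → ℝ) : ℕ → ℝ := fun j => if gpf j ≤ p then a j else 0

/-- Abscissa of absolute convergence of the Dirichlet series `∑_{n ≥ 1} a n * n ^ (-s)`,
as an extended real number. -/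
def sigmaA (a : ℕ → ℝ) : EReal :=
  sInf {x : EReal | ∃ σ : ℝ, x = (σ : EReal) ∧
    Summable fun n : ℕ => a (n + 1) * ((n + 1 : ℕ) : ℝ) ^ (-σ)}

/-- The abscissa `δ_a` of the Dirichlet series `∑_{n ≥ 1} a n * n ^ (-s)`:
the infimum of those `σ` for which every subseries supported on `p_n`-smooth
indices converges (absolutely). -/
def deltaA (a : ℕ → ℝ) : EReal :=
  sInf {x : EReal | ∃ σ : ℝ, x = (σ : EReal) ∧ ∀ n : ℕ,
    Summable fun j : ℕ => smoothCoeff (nthPrime n) a (j + 1) * ((j + 1 : ℕ) : ℝ) ^ (-σ)}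

/-!
The coefficients `c` of `1 / (α - g)` solve the renewal equation `α c = δ + b ⋆ c` for Dirichlet
convolution, so they are nonnegative, and summing nonnegative Dirichlet series in `[0, ∞]` turns
the equation into `α C(σ) = 1 + G(σ) C(σ)` with no convergence hypothesis. Restricting all
indices to `p`-smooth numbers commutes with Dirichlet convolution, so the same identity holds
for the smooth parts `C_p`, `G_p`. Since `G` is strictly decreasing with `G(ρ) = α`:
* for `σ > ρ`, `G(σ) < α`, and the identity applied to finite truncations of `c` gives
  `C(σ) ≤ 1 / (α - G(σ)) < ∞`;
* for `σ < ρ`, `G(σ) > α`, hence `G_p(σ) > α` for some prime `p`, and `α C_p = 1 + G_p C_p`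
  forces `C_p(σ) = ∞`.
So both abscissae of `c` equal `ρ`, and for `Re s > ρ` the product formula for absolutely
convergent L-series turns the renewal equation into `∑ c n n⁻ˢ = 1 / (α - g(s))`.
-/

open scoped ENNReal LSeries.notation

lemma gpf_le_iff {n P : ℕ} (hP : 1 ≤ P) : gpf n ≤ P ↔ ∀ p ∈ n.primeFactors, p ≤ P := by
  unfold gpf
  split_ifs with h
  · simp [h, hP]
  · exact Finset.sup_le_iff

lemma gpf_mul_le_iff {m n P : ℕ} (hm : m ≠ 0) (hn : n ≠ 0) (hP : 1 ≤ P) :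
    gpf (m * n) ≤ P ↔ gpf m ≤ P ∧ gpf n ≤ P := by
  simp only [gpf_le_iff hP, Nat.primeFactors_mul hm hn, Finset.forall_mem_union]

lemma gpf_le_of_le {n P : ℕ} (hP : 1 ≤ P) (hn : n ≤ P) : gpf n ≤ P :=
  (gpf_le_iff hP).2 fun _ hp => (Nat.le_of_mem_primeFactors hp).trans hn

lemma le_nthPrime (n : ℕ) : n ≤ nthPrime n :=
  (Nat.nth_strictMono Nat.infinite_setOfPred_prime).le_apply

lemma one_le_nthPrime (n : ℕ) : 1 ≤ nthPrime n :=
  (Nat.prime_nth_prime n).one_lt.le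

lemma smoothCoeff_nonneg {x : ℕ → ℝ} (hx : ∀ n ≠ 0, 0 ≤ x n) (P : ℕ) :
    ∀ n ≠ 0, 0 ≤ smoothCoeff P x n := by
  intro n hn
  unfold smoothCoeff
  split_ifs
  exacts [hx n hn, le_rfl]

def RenewalEq {R : Type*} [Semiring R] (a : R) (u v : ℕ → R) : Prop :=
  ∀ n ≠ 0, a * v n = (if n = 1 then 1 else 0) + ∑ p ∈ n.divisorsAntidiagonal, u p.1 * v p.2

namespace RenewalEq

lemma map {R S : Type*} [Semiring R] [Semiring S] {a : R} {u v : ℕ → R}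
    (h : RenewalEq a u v) (f : R →+* S) : RenewalEq (f a) (f ∘ u) (f ∘ v) := by
  intro n hn
  rw [Function.comp_apply, ← map_mul, h n hn]
  simp [apply_ite f]

lemma ofReal {a : ℝ} {u v : ℕ → ℝ} (h : RenewalEq a u v) (ha : 0 ≤ a)
    (hu : ∀ n ≠ 0, 0 ≤ u n) (hv : ∀ n ≠ 0, 0 ≤ v n) :
    RenewalEq (ENNReal.ofReal a) (ENNReal.ofReal ∘ u) (ENNReal.ofReal ∘ v) := by
  intro n hn
  have hprod : ∀ p ∈ n.divisorsAntidiagonal, 0 ≤ u p.1 * v p.2 := fun p hp =>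
    mul_nonneg (hu _ (Nat.ne_zero_of_mem_divisorsAntidiagonal hp).1)
      (hv _ (Nat.ne_zero_of_mem_divisorsAntidiagonal hp).2)
  rw [Function.comp_apply, ← ENNReal.ofReal_mul ha, h n hn,
    ENNReal.ofReal_add (by split_ifs <;> norm_num) (Finset.sum_nonneg hprod),
    ENNReal.ofReal_sum_of_nonneg hprod]
  congr 1
  · split_ifs <;> simp
  · exact Finset.sum_congr rfl fun p hp =>
      ENNReal.ofReal_mul (hu _ (Nat.ne_zero_of_mem_divisorsAntidiagonal hp).1)

lemma smoothCoeff {a : ℝ} {u v : ℕ → ℝ} (h : RenewalEq a u v) {P : ℕ} (hP : 1 ≤ P) :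
    RenewalEq a (_root_.smoothCoeff P u) (_root_.smoothCoeff P v) := by
  intro n hn
  have hterm : ∀ p ∈ n.divisorsAntidiagonal,
      _root_.smoothCoeff P u p.1 * _root_.smoothCoeff P v p.2 =
        if gpf n ≤ P then u p.1 * v p.2 else 0 := by
    intro p hp
    obtain ⟨h1, h2⟩ := Nat.ne_zero_of_mem_divisorsAntidiagonal hp
    rw [← (Nat.mem_divisorsAntidiagonal.1 hp).1]
    simp only [_root_.smoothCoeff, gpf_mul_le_iff h1 h2 hP]
    split_ifs <;> simp_all
  rw [Finset.sum_congr rfl hterm, Finset.sum_ite_irrel, Finset.sum_const_zero]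
  unfold _root_.smoothCoeff
  by_cases hg : gpf n ≤ P
  · simpa only [if_pos hg] using h n hn
  · have hn1 : n ≠ 1 := by rintro rfl; exact hg (by simpa [gpf] using hP)
    simp [hg, hn1]

end RenewalEq

/-- Solves `α c = δ + b ⋆ c` only when `b 1 = 0`: the recursion omits the term `b 1 * c n`. -/
def inverseCoeff (b : ℕ → ℝ) (α : ℝ) : ℕ → ℝ
  | n => α⁻¹ * ((if n = 1 then 1 else 0) +
      ∑ d ∈ n.properDivisors.attach, b (n / d.1) * inverseCoeff b α d.1)
decreasing_by exact (Nat.mem_properDivisors.mp d.2).2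

section inverseCoeff

variable {b : ℕ → ℝ} {α : ℝ}

lemma inverseCoeff_eq (n : ℕ) : inverseCoeff b α n =
    α⁻¹ * ((if n = 1 then 1 else 0) + ∑ d ∈ n.properDivisors, b (n / d) * inverseCoeff b α d) := by
  rw [inverseCoeff, Finset.sum_attach n.properDivisors fun d => b (n / d) * inverseCoeff b α d]

lemma inverseCoeff_nonneg (hα : 0 ≤ α) (hb : ∀ n ≠ 0, 0 ≤ b n) (n : ℕ) :
    0 ≤ inverseCoeff b α n := by
  induction n using Nat.strong_induction_on with
  | _ n ih =>
    rw [inverseCoeff_eq]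
    refine mul_nonneg (inv_nonneg.2 hα) (add_nonneg (by split_ifs <;> norm_num)
      (Finset.sum_nonneg fun d hd => mul_nonneg (hb _ ?_) (ih d (Nat.mem_properDivisors.1 hd).2)))
    exact (Nat.div_pos (Nat.mem_properDivisors.1 hd).2.le (Nat.pos_of_mem_properDivisors hd)).ne'

lemma renewalEq_inverseCoeff (hα : α ≠ 0) (hb1 : b 1 = 0) : RenewalEq α b (inverseCoeff b α) := by
  intro n hn
  rw [Nat.sum_divisorsAntidiagonal' fun d e => b d * inverseCoeff b α e,
    ← Nat.cons_self_properDivisors hn, Finset.sum_cons, Nat.div_self (Nat.pos_of_ne_zero hn),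
    hb1, zero_mul, zero_add, inverseCoeff_eq, mul_inv_cancel_left₀ hα]

end inverseCoeff

def dirichletWeight (σ : ℝ) (n : ℕ) : ℝ≥0∞ := if n = 0 then 0 else (n : ℝ≥0∞) ^ (-σ)

def ennLSeries (u : ℕ → ℝ≥0∞) (σ : ℝ) : ℝ≥0∞ := ∑' n, u n * dirichletWeight σ n

section ennLSeries

variable {u v : ℕ → ℝ≥0∞} {σ τ : ℝ}

lemma dirichletWeight_mul (σ : ℝ) (m n : ℕ) :
    dirichletWeight σ (m * n) = dirichletWeight σ m * dirichletWeight σ n := by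
  unfold dirichletWeight
  rcases eq_or_ne m 0 with rfl | hm
  · simp
  rcases eq_or_ne n 0 with rfl | hn
  · simp
  simp [hm, hn, ENNReal.mul_rpow_of_ne_top]

lemma dirichletWeight_ne_top (σ : ℝ) (n : ℕ) : dirichletWeight σ n ≠ ⊤ := by
  unfold dirichletWeight
  split_ifs with hn
  exacts [ENNReal.zero_ne_top, ENNReal.rpow_ne_top_of_ne_zero (by simpa) (by simp)]

lemma dirichletWeight_anti (h : σ ≤ τ) (n : ℕ) : dirichletWeight τ n ≤ dirichletWeight σ n := by
  unfold dirichletWeight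
  split_ifs with hn
  · exact le_rfl
  · exact ENNReal.rpow_le_rpow_of_exponent_le (by simpa [Nat.one_le_iff_ne_zero]) (neg_le_neg h)

lemma dirichletWeight_two_lt (h : σ < τ) : dirichletWeight τ 2 < dirichletWeight σ 2 := by
  simpa [dirichletWeight] using
    ENNReal.rpow_lt_rpow_of_exponent_lt (x := 2) (by norm_num) (by simp) (neg_lt_neg h)

lemma ennLSeries_mono (h : ∀ n ≠ 0, u n ≤ v n) (σ : ℝ) : ennLSeries u σ ≤ ennLSeries v σ := by
  refine ENNReal.tsum_le_tsum fun n => ?_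
  rcases eq_or_ne n 0 with rfl | hn
  · simp [dirichletWeight]
  · exact mul_le_mul_left (h n hn) _

lemma ennLSeries_anti (h : σ ≤ τ) : ennLSeries u τ ≤ ennLSeries u σ :=
  ENNReal.tsum_le_tsum fun n => mul_le_mul_right (dirichletWeight_anti h n) _

lemma ennLSeries_lt_of_lt (h : σ < τ) (hτ : ennLSeries u τ ≠ ⊤) (h2 : u 2 ≠ 0) (h2' : u 2 ≠ ⊤) :
    ennLSeries u τ < ennLSeries u σ :=
  ENNReal.tsum_lt_tsum (i := 2) hτ (fun n => mul_le_mul_right (dirichletWeight_anti h.le n) _)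
    (ENNReal.mul_lt_mul_right h2 h2' (dirichletWeight_two_lt h))

lemma mul_ennLSeries (a : ℝ≥0∞) (u : ℕ → ℝ≥0∞) (σ : ℝ) :
    a * ennLSeries u σ = ennLSeries (fun n => a * u n) σ := by
  simp only [ennLSeries, ← ENNReal.tsum_mul_left, mul_assoc]

lemma ennLSeries_convolution (u v : ℕ → ℝ≥0∞) (σ : ℝ) :
    ennLSeries (fun n => ∑ p ∈ n.divisorsAntidiagonal, u p.1 * v p.2) σ =
      ennLSeries u σ * ennLSeries v σ := by
  set F : ℕ × ℕ → ℝ≥0∞ := fun p => u p.1 * dirichletWeight σ p.1 * (v p.2 * dirichletWeight σ p.2)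
  have hfiber (n : ℕ) : (∑ p ∈ n.divisorsAntidiagonal, u p.1 * v p.2) * dirichletWeight σ n =
      ∑' p : (fun p : ℕ × ℕ => p.1 * p.2) ⁻¹' {n}, F p := by
    rcases eq_or_ne n 0 with rfl | hn
    · rw [Nat.divisorsAntidiagonal_zero, Finset.sum_empty, zero_mul]
      refine (ENNReal.tsum_eq_zero.2 fun ⟨p, hp⟩ => ?_).symm
      rcases mul_eq_zero.1 hp with h | h <;> simp [F, dirichletWeight, h]
    rw [show (fun p : ℕ × ℕ => p.1 * p.2) ⁻¹' {n} = n.divisorsAntidiagonal by ext; simp [hn],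
      Finset.tsum_subtype' n.divisorsAntidiagonal F, Finset.sum_mul]
    refine Finset.sum_congr rfl fun p hp => ?_
    rw [← (Nat.mem_divisorsAntidiagonal.1 hp).1, dirichletWeight_mul]
    ring
  calc ennLSeries (fun n => ∑ p ∈ n.divisorsAntidiagonal, u p.1 * v p.2) σ
      = ∑' p, F p := by rw [ennLSeries, tsum_congr hfiber, ENNReal.tsum_fiberwise]
    _ = ∑' (m : ℕ) (n : ℕ), u m * dirichletWeight σ m * (v n * dirichletWeight σ n) :=
      ENNReal.tsum_prod (f := fun m n => u m * dirichletWeight σ m * (v n * dirichletWeight σ n))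
    _ = ennLSeries u σ * ennLSeries v σ := by
      simp only [ennLSeries, ENNReal.tsum_mul_left, ENNReal.tsum_mul_right]

lemma ennLSeries_delta_add_convolution (u v : ℕ → ℝ≥0∞) (σ : ℝ) :
    ennLSeries (fun n => (if n = 1 then 1 else 0) +
      ∑ p ∈ n.divisorsAntidiagonal, u p.1 * v p.2) σ = 1 + ennLSeries u σ * ennLSeries v σ := by
  rw [← ennLSeries_convolution]
  simp only [ennLSeries, add_mul, ENNReal.tsum_add]
  congr 1
  rw [tsum_eq_single 1 fun n hn => by simp [hn]]
  simp [dirichletWeight]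

lemma RenewalEq.mul_ennLSeries {a : ℝ≥0∞} (h : RenewalEq a u v) (σ : ℝ) :
    a * ennLSeries v σ = 1 + ennLSeries u σ * ennLSeries v σ := by
  rw [_root_.mul_ennLSeries, ← ennLSeries_delta_add_convolution]
  exact le_antisymm (ennLSeries_mono (fun n hn => (h n hn).le) σ)
    (ennLSeries_mono (fun n hn => (h n hn).ge) σ)

lemma ENNReal.le_inv_tsub_of_mul_le_one_add {a b v : ℝ≥0∞} (h : a * v ≤ 1 + b * v) (hv : v ≠ ⊤) :
    v ≤ (a - b)⁻¹ := by
  rw [ENNReal.le_inv_iff_mul_le, mul_comm, ENNReal.sub_mul fun _ _ => hv, tsub_le_iff_left,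
    add_comm]
  exact h

lemma ENNReal.eq_top_of_mul_eq_one_add {a b v : ℝ≥0∞} (h : a * v = 1 + b * v) (hab : a < b) :
    v = ⊤ := by
  by_contra hv
  have hv0 : v ≠ 0 := by rintro rfl; simp at h
  rw [mul_comm a, mul_comm b] at h
  exact ((ENNReal.mul_lt_mul_right hv0 hv hab).trans_le le_add_self).ne h

lemma RenewalEq.ennLSeries_le_inv_tsub {a : ℝ≥0∞} (h : RenewalEq a u v) (hv : ∀ n, v n ≠ ⊤)
    (σ : ℝ) : ennLSeries v σ ≤ (a - ennLSeries u σ)⁻¹ := by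
  rw [ennLSeries, ENNReal.tsum_eq_iSup_nat]
  refine iSup_le fun N => ?_
  set vN : ℕ → ℝ≥0∞ := fun n => if n < N then v n else 0
  have hvN (n : ℕ) (hn : n ≠ 0) :
      a * vN n ≤ (if n = 1 then 1 else 0) + ∑ p ∈ n.divisorsAntidiagonal, u p.1 * vN p.2 := by
    by_cases hnN : n < N
    · have hsnd : ∀ p ∈ n.divisorsAntidiagonal, vN p.2 = v p.2 := fun p hp =>
        if_pos ((Nat.divisor_le (Nat.snd_mem_divisors_of_mem_antidiagonal hp)).trans_lt hnN)
      rw [Finset.sum_congr rfl fun p hp => by rw [hsnd p hp]]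
      simp only [vN, if_pos hnN]
      exact (h n hn).le
    · simp [vN, hnN]
  have hsum : ennLSeries vN σ = ∑ n ∈ Finset.range N, v n * dirichletWeight σ n := by
    rw [ennLSeries, tsum_eq_sum (s := Finset.range N) fun n hn => by
      rw [Finset.mem_range] at hn; simp [vN, hn]]
    exact Finset.sum_congr rfl fun n hn => by simp [vN, Finset.mem_range.1 hn]
  rw [← hsum]
  refine ENNReal.le_inv_tsub_of_mul_le_one_add ?_ ?_
  · rw [_root_.mul_ennLSeries, ← ennLSeries_delta_add_convolution]
    exact ennLSeries_mono hvN σ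
  · rw [hsum, ENNReal.sum_ne_top]
    exact fun n _ => ENNReal.mul_ne_top (hv n) (dirichletWeight_ne_top σ n)

lemma exists_lt_ennLSeries_smoothCoeff {x : ℕ → ℝ} {a : ℝ≥0∞}
    (h : a < ennLSeries (ENNReal.ofReal ∘ x) σ) :
    ∃ M, a < ennLSeries (ENNReal.ofReal ∘ smoothCoeff (nthPrime M) x) σ := by
  rw [ennLSeries, ENNReal.tsum_eq_iSup_nat, lt_iSup_iff] at h
  obtain ⟨N, hN⟩ := h
  refine ⟨N, hN.trans_le ((Finset.sum_le_sum fun n hn => ?_).trans (ENNReal.sum_le_tsum _))⟩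
  have hn : gpf n ≤ nthPrime N :=
    gpf_le_of_le (one_le_nthPrime N) ((Finset.mem_range.1 hn).le.trans (le_nthPrime N))
  simp [smoothCoeff, hn]

lemma ennLSeries_smoothCoeff_le {x : ℕ → ℝ} (hx : ∀ n ≠ 0, 0 ≤ x n) (P : ℕ) :
    ennLSeries (ENNReal.ofReal ∘ smoothCoeff P x) σ ≤ ennLSeries (ENNReal.ofReal ∘ x) σ := by
  refine ennLSeries_mono (fun n hn => ENNReal.ofReal_le_ofReal ?_) σ
  unfold smoothCoeff
  split_ifs
  exacts [le_rfl, hx n hn]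

end ennLSeries

section RealSeries

variable {x : ℕ → ℝ} {σ : ℝ}

lemma ennLSeries_ofReal_eq_tsum :
    ennLSeries (ENNReal.ofReal ∘ x) σ =
      ∑' n : ℕ, ENNReal.ofReal (x (n + 1) * ((n + 1 : ℕ) : ℝ) ^ (-σ)) := by
  rw [ennLSeries, tsum_eq_zero_add' ENNReal.summable, dirichletWeight, if_pos rfl, mul_zero,
    zero_add]
  refine tsum_congr fun n => ?_
  rw [ENNReal.ofReal_mul' (by positivity), ← ENNReal.ofReal_rpow_of_pos (by positivity),
    ENNReal.ofReal_natCast]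
  simp [dirichletWeight]

lemma ennLSeries_ofReal_ne_top_iff (hx : ∀ n ≠ 0, 0 ≤ x n) :
    ennLSeries (ENNReal.ofReal ∘ x) σ ≠ ⊤ ↔
      Summable fun n : ℕ => x (n + 1) * ((n + 1 : ℕ) : ℝ) ^ (-σ) := by
  have hnn (n : ℕ) : 0 ≤ x (n + 1) * ((n + 1 : ℕ) : ℝ) ^ (-σ) :=
    mul_nonneg (hx _ n.succ_ne_zero) (by positivity)
  rw [ennLSeries_ofReal_eq_tsum]
  exact ⟨fun h => (ENNReal.summable_toReal h).congr fun n => ENNReal.toReal_ofReal (hnn n),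
    Summable.tsum_ofReal_ne_top⟩

lemma ennLSeries_ofReal_eq_ofReal_tsum (hx : ∀ n ≠ 0, 0 ≤ x n)
    (hs : Summable fun n : ℕ => x (n + 1) * ((n + 1 : ℕ) : ℝ) ^ (-σ)) :
    ennLSeries (ENNReal.ofReal ∘ x) σ =
      ENNReal.ofReal (∑' n : ℕ, x (n + 1) * ((n + 1 : ℕ) : ℝ) ^ (-σ)) := by
  rw [ennLSeries_ofReal_eq_tsum,
    ENNReal.ofReal_tsum_of_nonneg (fun n => mul_nonneg (hx _ n.succ_ne_zero) (by positivity)) hs]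

lemma LSeriesSummable_ofReal_iff :
    LSeriesSummable (fun n => (x n : ℂ)) σ ↔
      Summable fun n : ℕ => x (n + 1) * ((n + 1 : ℕ) : ℝ) ^ (-σ) := by
  rw [LSeriesSummable, ← summable_nat_add_iff 1, ← Complex.summable_ofReal]
  refine summable_congr fun n => ?_
  rw [LSeries.term_of_ne_zero n.succ_ne_zero, Complex.ofReal_mul,
    Complex.ofReal_cpow (by positivity), Complex.ofReal_neg, Complex.cpow_neg, div_eq_mul_inv]
  push_cast
  rfl

end RealSeries

lemma LSeries.term_succ (f : ℕ → ℂ) (s : ℂ) (n : ℕ) :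
    LSeries.term f s (n + 1) = f (n + 1) * ((n + 1 : ℕ) : ℂ) ^ (-s) := by
  rw [LSeries.term_of_ne_zero n.succ_ne_zero, Complex.cpow_neg, div_eq_mul_inv]

lemma LSeriesSummable.summable_succ {f : ℕ → ℂ} {s : ℂ} (h : LSeriesSummable f s) :
    Summable fun n : ℕ => f (n + 1) * ((n + 1 : ℕ) : ℂ) ^ (-s) :=
  ((summable_nat_add_iff 1).2 h).congr (LSeries.term_succ f s)

lemma LSeriesSummable.LSeries_eq_tsum_succ {f : ℕ → ℂ} {s : ℂ} (h : LSeriesSummable f s) :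
    LSeries f s = ∑' n : ℕ, f (n + 1) * ((n + 1 : ℕ) : ℂ) ^ (-s) := by
  rw [LSeries, h.tsum_eq_zero_add, LSeries.term_zero, zero_add]
  exact tsum_congr (LSeries.term_succ f s)

lemma RenewalEq.LSeries_eq_inv {a s : ℂ} {u v : ℕ → ℂ} (h : RenewalEq a u v)
    (hu : LSeriesSummable u s) (hv : LSeriesSummable v s) :
    LSeries v s = (a - LSeries u s)⁻¹ := by
  have hδ : LSeries δ s = a * LSeries v s - LSeries u s * LSeries v s := by
    rw [← LSeries_smul, ← LSeries_convolution' hu hv, ← LSeries_sub (hv.smul a) (hu.convolution hv)]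
    refine LSeries_congr (fun {n} hn => ?_) s
    simp [LSeries.delta, LSeries.convolution_def, h n hn]
  rw [LSeries_delta, Pi.one_apply] at hδ
  exact eq_inv_of_mul_eq_one_right (by linear_combination -hδ)

lemma sInf_setOf_coe_eq {P : ℝ → Prop} {ρ : ℝ} (hgt : ∀ σ, ρ < σ → P σ)
    (hle : ∀ σ, P σ → ρ ≤ σ) : sInf {x : EReal | ∃ σ : ℝ, x = σ ∧ P σ} = ρ := by
  refine le_antisymm (le_of_forall_gt fun c hc => ?_) (le_sInf ?_)
  · obtain ⟨z, hρz, hzc⟩ := EReal.exists_between_coe_real hc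
    have hz : (z : EReal) ∈ {x : EReal | ∃ σ : ℝ, x = σ ∧ P σ} :=
      ⟨z, rfl, hgt z (EReal.coe_lt_coe_iff.1 hρz)⟩
    exact (sInf_le hz).trans_lt hzc
  · rintro _ ⟨σ, rfl, hσ⟩
    exact EReal.coe_le_coe_iff.2 (hle σ hσ)

section Abscissae

variable {x : ℕ → ℝ} {ρ : ℝ}

lemma sigmaA_eq_of_ennLSeries (hx : ∀ n ≠ 0, 0 ≤ x n)
    (habove : ∀ σ, ρ < σ → ennLSeries (ENNReal.ofReal ∘ x) σ ≠ ⊤)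
    (hbelow : ∀ σ < ρ, ∃ M, ennLSeries (ENNReal.ofReal ∘ smoothCoeff (nthPrime M) x) σ = ⊤) :
    sigmaA x = ρ := by
  refine sInf_setOf_coe_eq (fun σ hσ => (ennLSeries_ofReal_ne_top_iff hx).1 (habove σ hσ))
    fun σ hσ => ?_
  by_contra! hlt
  obtain ⟨M, hM⟩ := hbelow σ hlt
  exact (ennLSeries_ofReal_ne_top_iff hx).2 hσ (top_unique (hM ▸ ennLSeries_smoothCoeff_le hx _))

lemma deltaA_eq_of_ennLSeries (hx : ∀ n ≠ 0, 0 ≤ x n)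
    (habove : ∀ σ, ρ < σ → ennLSeries (ENNReal.ofReal ∘ x) σ ≠ ⊤)
    (hbelow : ∀ σ < ρ, ∃ M, ennLSeries (ENNReal.ofReal ∘ smoothCoeff (nthPrime M) x) σ = ⊤) :
    deltaA x = ρ := by
  refine sInf_setOf_coe_eq (fun σ hσ M => (ennLSeries_ofReal_ne_top_iff (smoothCoeff_nonneg hx _)).1
    (ne_top_of_le_ne_top (habove σ hσ) (ennLSeries_smoothCoeff_le hx _))) fun σ hσ => ?_
  by_contra! hlt
  obtain ⟨M, hM⟩ := hbelow σ hlt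
  exact (ennLSeries_ofReal_ne_top_iff (smoothCoeff_nonneg hx _)).2 (hσ M) hM

end Abscissae
section inverseCoeff

variable {b : ℕ → ℝ} {α σ : ℝ}

lemma ennLSeries_inverseCoeff_ne_top (hα : 0 < α) (hb1 : b 1 = 0) (hb : ∀ n ≠ 0, 0 ≤ b n)
    (hσ : ennLSeries (ENNReal.ofReal ∘ b) σ < ENNReal.ofReal α) :
    ennLSeries (ENNReal.ofReal ∘ inverseCoeff b α) σ ≠ ⊤ := by
  have h := (renewalEq_inverseCoeff hα.ne' hb1).ofReal hα.le hb
    fun n _ => inverseCoeff_nonneg hα.le hb n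
  exact ne_top_of_le_ne_top (ENNReal.inv_ne_top.2 (tsub_pos_of_lt hσ).ne')
    (h.ennLSeries_le_inv_tsub (fun _ => ENNReal.ofReal_ne_top) σ)

lemma exists_ennLSeries_smoothCoeff_inverseCoeff_eq_top (hα : 0 < α) (hb1 : b 1 = 0)
    (hb : ∀ n ≠ 0, 0 ≤ b n) (hσ : ENNReal.ofReal α < ennLSeries (ENNReal.ofReal ∘ b) σ) :
    ∃ M, ennLSeries (ENNReal.ofReal ∘ smoothCoeff (nthPrime M) (inverseCoeff b α)) σ = ⊤ := by
  obtain ⟨M, hM⟩ := exists_lt_ennLSeries_smoothCoeff hσ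
  have h := ((renewalEq_inverseCoeff hα.ne' hb1).smoothCoeff (one_le_nthPrime M)).ofReal hα.le
    (smoothCoeff_nonneg hb _) (smoothCoeff_nonneg (fun n _ => inverseCoeff_nonneg hα.le hb n) _)
  exact ⟨M, ENNReal.eq_top_of_mul_eq_one_add (h.mul_ennLSeries σ) hM⟩

end inverseCoeff

theorem statement9_general (b : ℕ → ℝ) (hb1 : b 1 = 0) (hbpos : ∀ n : ℕ, 2 ≤ n → 0 < b n)
    (α : ℝ) (hα : 0 < α) (ρ : ℝ) (hρ : sigmaA b < (ρ : EReal))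
    (hgρ : ∑' n : ℕ, b (n + 1) * ((n + 1 : ℕ) : ℝ) ^ (-ρ) = α) :
    ∃ c : ℕ → ℝ,
      (∃ σ₀ : ℝ, ∀ s : ℂ, σ₀ < s.re →
        (Summable fun n : ℕ => (c (n + 1) : ℂ) * ((n + 1 : ℕ) : ℂ) ^ (-s)) ∧
        (∑' n : ℕ, (c (n + 1) : ℂ) * ((n + 1 : ℕ) : ℂ) ^ (-s)) =
          ((α : ℂ) - ∑' n : ℕ, (b (n + 1) : ℂ) * ((n + 1 : ℕ) : ℂ) ^ (-s))⁻¹) ∧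
      sigmaA c = (ρ : EReal) ∧ deltaA c = (ρ : EReal) := by
  have hb (n : ℕ) (hn : n ≠ 0) : 0 ≤ b n := by
    rcases eq_or_ne n 1 with rfl | hn1
    exacts [hb1.ge, (hbpos n (by omega)).le]
  have hc (n : ℕ) (_ : n ≠ 0) : 0 ≤ inverseCoeff b α n := inverseCoeff_nonneg hα.le hb n
  obtain ⟨_, ⟨σ₁, rfl, hσ₁⟩, hσ₁ρ⟩ := sInf_lt_iff.1 hρ
  have hbρ : Summable fun n : ℕ => b (n + 1) * ((n + 1 : ℕ) : ℝ) ^ (-ρ) :=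
    (ennLSeries_ofReal_ne_top_iff hb).1 <| ne_top_of_le_ne_top
      ((ennLSeries_ofReal_ne_top_iff hb).2 hσ₁) (ennLSeries_anti (EReal.coe_lt_coe_iff.1 hσ₁ρ).le)
  have hBρ : ennLSeries (ENNReal.ofReal ∘ b) ρ = ENNReal.ofReal α := by
    rw [ennLSeries_ofReal_eq_ofReal_tsum hb hbρ, hgρ]
  have hb2 : ENNReal.ofReal (b 2) ≠ 0 := by simpa using hbpos 2 le_rfl
  have habove (σ : ℝ) (hσ : ρ < σ) := ennLSeries_inverseCoeff_ne_top hα hb1 hb <|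
    hBρ ▸ ennLSeries_lt_of_lt hσ (ne_top_of_le_ne_top (hBρ ▸ ENNReal.ofReal_ne_top)
      (ennLSeries_anti hσ.le)) hb2 ENNReal.ofReal_ne_top
  have hbelow (σ : ℝ) (hσ : σ < ρ) := exists_ennLSeries_smoothCoeff_inverseCoeff_eq_top hα hb1 hb <|
    hBρ ▸ ennLSeries_lt_of_lt hσ (hBρ ▸ ENNReal.ofReal_ne_top) hb2 ENNReal.ofReal_ne_top
  refine ⟨inverseCoeff b α, ⟨ρ, fun s hs => ?_⟩, sigmaA_eq_of_ennLSeries hc habove hbelow,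
    deltaA_eq_of_ennLSeries hc habove hbelow⟩
  have hcs : LSeriesSummable (fun n => (inverseCoeff b α n : ℂ)) s :=
    (LSeriesSummable_ofReal_iff.2 ((ennLSeries_ofReal_ne_top_iff hc).1 (habove _ hs))).of_re_le_re
      (by simp)
  have hbs : LSeriesSummable (fun n => (b n : ℂ)) s :=
    (LSeriesSummable_ofReal_iff.2 hbρ).of_re_le_re (by simpa using hs.le)
  refine ⟨hcs.summable_succ, ?_⟩
  rw [← hcs.LSeries_eq_tsum_succ, ← hbs.LSeries_eq_tsum_succ]
  exact ((renewalEq_inverseCoeff hα.ne' hb1).map Complex.ofRealHom).LSeries_eq_inv hbs hcs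

/-- Let `g(s) = ∑_{n ≥ 2} b n * n^{-s}` with positive coefficients
(encoded by `b 1 = 0` and `b n > 0` for `n ≥ 2`), with `σ_a(g) < ∞` (possibly `⊥`).
If `α > 0` and `ρ > σ_a(g)` satisfies `g(ρ) = α`, then `f = 1/(α - g)` is representable
by a convergent Dirichlet series `∑_{n ≥ 1} c n * n^{-s}` on some right half-plane, and
`σ_a(f) = δ_a(f) = ρ`. -/
theorem statement9 (b : ℕ → ℝ) (hb1 : b 1 = 0) (hbpos : ∀ n : ℕ, 2 ≤ n → 0 < b n)
    (hfin : sigmaA b < ⊤) (α : ℝ) (hα : 0 < α) (ρ : ℝ) (hρ : sigmaA b < (ρ : EReal))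
    (hgρ : ∑' n : ℕ, b (n + 1) * ((n + 1 : ℕ) : ℝ) ^ (-ρ) = α) :
    ∃ c : ℕ → ℝ,
      (∃ σ₀ : ℝ, ∀ s : ℂ, σ₀ < s.re →
        (Summable fun n : ℕ => (c (n + 1) : ℂ) * ((n + 1 : ℕ) : ℂ) ^ (-s)) ∧
        (∑' n : ℕ, (c (n + 1) : ℂ) * ((n + 1 : ℕ) : ℂ) ^ (-s)) =
          ((α : ℂ) - ∑' n : ℕ, (b (n + 1) : ℂ) * ((n + 1 : ℕ) : ℂ) ^ (-s))⁻¹) ∧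
      sigmaA c = (ρ : EReal) ∧ deltaA c = (ρ : EReal) :=
  statement9_general b hb1 hbpos α hα ρ hρ hgρ
end
end

section
/- Let r ≥ 0 and let {c_n}_{n≥1} be the multiplicative sequence with c_{p^m} = p^{r−1} for every prime p and integer m ≥ 1. Then the Dirichlet series f(s) = ∑_{n=1}^∞ c_n n^{-s} satisfies δ_a(f) = 0 and σ_a(f) ≥ r. -/
open scoped BigOperators Classical

noncomputable section

/-! For `σ > 0` every Euler factor `∑ₖ c(pᵏ) p^(-kσ)` is a convergent geometric series, and a
`p`-smooth subseries is the product of finitely many of them, so `δ_a ≤ 0`. For `σ ≤ 0` the terms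
along the powers of a prime `q` form a geometric series of ratio `q^(-σ) ≥ 1`, so `δ_a ≥ 0`. On the
primes the terms are `p^(r-1-σ)`, and `∑ 1/p` diverges, so absolute convergence forces `σ > r`. -/

lemma coe_le_sInf_of_forall {P : ℝ → Prop} {a : ℝ} (h : ∀ σ, P σ → a ≤ σ) :
    (a : EReal) ≤ sInf {x : EReal | ∃ σ : ℝ, x = σ ∧ P σ} :=
  le_sInf <| by
    rintro _ ⟨σ, rfl, hσ⟩
    exact EReal.coe_le_coe_iff.2 (h σ hσ)

lemma sInf_le_coe_of_forall_lt {P : ℝ → Prop} {a : ℝ} (h : ∀ σ, a < σ → P σ) :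
    sInf {x : EReal | ∃ σ : ℝ, x = σ ∧ P σ} ≤ a := by
  by_contra! hlt
  obtain ⟨z, haz, hz⟩ := EReal.exists_between_coe_real hlt
  have hmem : (z : EReal) ∈ {x : EReal | ∃ σ : ℝ, x = σ ∧ P σ} :=
    ⟨z, rfl, h z (EReal.coe_lt_coe_iff.1 haz)⟩
  exact (sInf_le hmem).not_gt hz

lemma gpf_le_iff_mem_smoothNumbers {j p : ℕ} (hp : 1 ≤ p) (hj : j ≠ 0) :
    gpf j ≤ p ↔ j ∈ Nat.smoothNumbers (p + 1) := by
  rw [Nat.mem_smoothNumbers', gpf]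
  split_ifs with h
  · subst h
    simp only [hp, true_iff, Nat.dvd_one]
    rintro q hq rfl
    exact absurd hq Nat.not_prime_one
  · simp only [Finset.sup_le_iff, id, Nat.mem_primeFactors, Nat.lt_succ_iff]
    exact ⟨fun H q hq hqj => H q ⟨hq, hqj, hj⟩, fun H q ⟨hq, hqj, _⟩ => H q hq hqj⟩

/-- Extended by `0` at `n = 0`, so that the Euler product lemmas of Mathlib apply. -/
def dirichletTerm (c : ℕ → ℝ) (σ : ℝ) (n : ℕ) : ℝ :=
  if n = 0 then 0 else c n * (n : ℝ) ^ (-σ)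

section DirichletTerm

variable {c : ℕ → ℝ} {σ : ℝ}

lemma summable_dirichletTerm_iff :
    (Summable fun n : ℕ => c (n + 1) * ((n + 1 : ℕ) : ℝ) ^ (-σ)) ↔
      Summable (dirichletTerm c σ) := by
  rw [← summable_nat_add_iff 1 (f := dirichletTerm c σ)]
  simp [dirichletTerm]

lemma dirichletTerm_one (hc1 : c 1 = 1) : dirichletTerm c σ 1 = 1 := by
  simp [dirichletTerm, hc1]

lemma dirichletTerm_mul
    (hcmul : ∀ m n : ℕ, 1 ≤ m → 1 ≤ n → Nat.Coprime m n → c (m * n) = c m * c n)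
    {m n : ℕ} (hmn : Nat.Coprime m n) :
    dirichletTerm c σ (m * n) = dirichletTerm c σ m * dirichletTerm c σ n := by
  rcases Nat.eq_zero_or_pos m with rfl | hm
  · simp [dirichletTerm]
  rcases Nat.eq_zero_or_pos n with rfl | hn
  · simp [dirichletTerm]
  simp only [dirichletTerm, hm.ne', hn.ne', mul_ne_zero hm.ne' hn.ne', if_false]
  rw [hcmul m n hm hn hmn, Nat.cast_mul, Real.mul_rpow (by positivity) (by positivity)]
  ring

lemma dirichletTerm_smoothCoeff {p : ℕ} (hp : 1 ≤ p) :
    dirichletTerm (smoothCoeff p c) σ =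
      (Nat.smoothNumbers (p + 1)).indicator (dirichletTerm c σ) := by
  ext j
  rcases eq_or_ne j 0 with rfl | hj
  · simp [dirichletTerm, Set.indicator_apply]
  by_cases h : gpf j ≤ p
  · rw [Set.indicator_of_mem ((gpf_le_iff_mem_smoothNumbers hp hj).1 h)]
    simp [dirichletTerm, smoothCoeff, h]
  · rw [Set.indicator_of_notMem (mt (gpf_le_iff_mem_smoothNumbers hp hj).2 h)]
    simp [dirichletTerm, smoothCoeff, h]

lemma summable_dirichletTerm_smoothCoeff (hc1 : c 1 = 1)
    (hcmul : ∀ m n : ℕ, 1 ≤ m → 1 ≤ n → Nat.Coprime m n → c (m * n) = c m * c n)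
    (hsum : ∀ {q : ℕ}, q.Prime → Summable fun k : ℕ => ‖dirichletTerm c σ (q ^ k)‖)
    {p : ℕ} (hp : 1 ≤ p) :
    Summable (dirichletTerm (smoothCoeff p c) σ) := by
  have hsmooth := (EulerProduct.summable_and_hasSum_smoothNumbers_prod_primesBelow_tsum
    (dirichletTerm_one hc1) (dirichletTerm_mul hcmul) hsum (p + 1)).1
  rw [dirichletTerm_smoothCoeff hp]
  exact summable_subtype_iff_indicator.1 hsmooth.of_norm

variable {r : ℝ} (hcpp : ∀ p k : ℕ, p.Prime → 1 ≤ k → c (p ^ k) = (p : ℝ) ^ (r - 1))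
include hcpp

lemma dirichletTerm_prime_pow {q k : ℕ} (hq : q.Prime) (hk : 1 ≤ k) :
    dirichletTerm c σ (q ^ k) = (q : ℝ) ^ (r - 1) * ((q : ℝ) ^ (-σ)) ^ k := by
  rw [dirichletTerm, if_neg (pow_ne_zero k hq.ne_zero), hcpp q k hq hk, Nat.cast_pow,
    ← Real.rpow_pow_comm (Nat.cast_nonneg q)]

lemma summable_norm_dirichletTerm_prime_pow (hσ : 0 < σ) {q : ℕ} (hq : q.Prime) :
    Summable fun k : ℕ => ‖dirichletTerm c σ (q ^ k)‖ := by
  have hq1 : (1 : ℝ) < q := by exact_mod_cast hq.one_lt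
  have ht0 : 0 ≤ (q : ℝ) ^ (-σ) := by positivity
  have ht1 : (q : ℝ) ^ (-σ) < 1 := Real.rpow_lt_one_of_one_lt_of_neg hq1 (by linarith)
  rw [← summable_nat_add_iff 1]
  refine (((summable_geometric_of_lt_one ht0 ht1).mul_left ((q : ℝ) ^ (r - 1))).comp_injective
    (add_left_injective 1)).congr fun k => ?_
  rw [Function.comp_apply, dirichletTerm_prime_pow hcpp hq (Nat.le_add_left 1 k),
    Real.norm_of_nonneg (by positivity)]

lemma pos_of_summable_dirichletTerm_smoothCoeff {q : ℕ} (hq : q.Prime)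
    (h : Summable (dirichletTerm (smoothCoeff q c) σ)) : 0 < σ := by
  rw [dirichletTerm_smoothCoeff hq.one_lt.le] at h
  have hpow : Summable fun k : ℕ => (q : ℝ) ^ (r - 1) * ((q : ℝ) ^ (-σ)) ^ (k + 1) := by
    refine (h.comp_injective ((Nat.pow_right_injective hq.two_le).comp
      (add_left_injective 1))).congr fun k => ?_
    have hmem : q ^ (k + 1) ∈ Nat.smoothNumbers (q + 1) :=
      Nat.mem_smoothNumbers_of_primeFactors_subset (pow_ne_zero _ hq.ne_zero)
        (by simp [Nat.primeFactors_prime_pow (Nat.succ_ne_zero k) hq])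
    simp only [Function.comp_apply, Set.indicator_of_mem hmem,
      dirichletTerm_prime_pow hcpp hq (Nat.le_add_left 1 k)]
  rw [summable_mul_left_iff (by have := hq.pos; positivity), summable_nat_add_iff 1,
    summable_geometric_iff_norm_lt_one, Real.norm_of_nonneg (by positivity)] at hpow
  by_contra! hσ
  exact hpow.not_ge (Real.one_le_rpow (by exact_mod_cast hq.one_lt.le) (by linarith))

lemma lt_of_summable_dirichletTerm (h : Summable (dirichletTerm c σ)) : r < σ := by
  have hprimes : Summable fun p : Nat.Primes => (p : ℝ) ^ (r - 1 - σ) := by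
    refine (h.comp_injective Subtype.val_injective).congr fun p => ?_
    have hp : (p : ℕ).Prime := p.2
    rw [Function.comp_apply, ← pow_one (p : ℕ), dirichletTerm_prime_pow hcpp hp le_rfl,
      pow_one, pow_one, ← Real.rpow_add (by exact_mod_cast hp.pos)]
    ring_nf
  linarith [Nat.Primes.summable_rpow.1 hprimes]

end DirichletTerm

theorem statement13_general (r : ℝ) (c : ℕ → ℝ) (hc1 : c 1 = 1)
    (hcpp : ∀ p k : ℕ, p.Prime → 1 ≤ k → c (p ^ k) = (p : ℝ) ^ (r - 1))
    (hcmul : ∀ m n : ℕ, 1 ≤ m → 1 ≤ n → Nat.Coprime m n → c (m * n) = c m * c n) :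
    deltaA c = (0 : EReal) ∧ (r : EReal) ≤ sigmaA c := by
  refine ⟨le_antisymm ?_ ?_, ?_⟩
  · rw [← EReal.coe_zero]
    exact sInf_le_coe_of_forall_lt fun σ hσ n => summable_dirichletTerm_iff.2 <|
      summable_dirichletTerm_smoothCoeff hc1 hcmul
        (summable_norm_dirichletTerm_prime_pow hcpp hσ) (Nat.prime_nth_prime n).one_lt.le
  · exact coe_le_sInf_of_forall fun σ h => le_of_lt <|
      pos_of_summable_dirichletTerm_smoothCoeff hcpp (Nat.prime_nth_prime 0)
        (summable_dirichletTerm_iff.1 (h 0))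
  · exact coe_le_sInf_of_forall fun σ h =>
      (lt_of_summable_dirichletTerm hcpp (summable_dirichletTerm_iff.1 h)).le

/-- Let `r ≥ 0` and let `c` be the multiplicative sequence of positive
reals with `c (p^m) = p^{r-1}` for every prime `p` and `m ≥ 1`. Then the Dirichlet series
`f(s) = ∑_{n ≥ 1} c n * n^{-s}` satisfies `δ_a(f) = 0` and `σ_a(f) ≥ r`. -/
theorem statement13 (r : ℝ) (hr : 0 ≤ r) (c : ℕ → ℝ) (hc1 : c 1 = 1)
    (hcpos : ∀ n : ℕ, 1 ≤ n → 0 < c n)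
    (hcpp : ∀ p k : ℕ, p.Prime → 1 ≤ k → c (p ^ k) = (p : ℝ) ^ (r - 1))
    (hcmul : ∀ m n : ℕ, 1 ≤ m → 1 ≤ n → Nat.Coprime m n → c (m * n) = c m * c n) :
    deltaA c = (0 : EReal) ∧ (r : EReal) ≤ sigmaA c :=
  statement13_general r c hc1 hcpp hcmul
end
end
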